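/- arXiv:2505.17401 — 3 statements merged into one kernel-verified Lean document; each statement's English description precedes it below -/
import Mathlib

section
/- In the K-algebra H ⊗_K H (tensor product of algebras), for every s ∈ S and every v ∈ W with ℓ(sv) = ℓ(s) + ℓ(v), one has (T_s ⊗ 1)·(T_v ⊗ T_v^{-1} − T_{sv} ⊗ T_{sv}^{-1}) = (T_v ⊗ T_v^{-1} − T_{sv} ⊗ T_{sv}^{-1})·(1 ⊗ (−q_s T_s^{-1})). -/
open scoped TensorProduct

/-- in the `K`-algebra `H ⊗[K] H`, where `H` is the finite Hecke algebra of
a finite Coxeter system `(W,S)` with parameters `q_s`, for every simple reflection `s`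
and every `v ∈ W` with `ℓ(sv) = ℓ(s) + ℓ(v)` one has
`(T_s ⊗ 1)·(T_v ⊗ T_v⁻¹ − T_{sv} ⊗ T_{sv}⁻¹) = (T_v ⊗ T_v⁻¹ − T_{sv} ⊗ T_{sv}⁻¹)·(1 ⊗ (−q_s T_s⁻¹))`. -/
theorem stmt_8 {B W : Type} [Group W] [Fintype W]
    {M : CoxeterMatrix B} (cs : CoxeterSystem M W)
    {K : Type} [Field K] [CharZero K]
    {H : Type} [Ring H] [Algebra K H]
    (qp : B → Kˣ)
    (hqconj : ∀ s t : B, IsConj (cs.simple s) (cs.simple t) → qp s = qp t)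
    (T : W → H) (bT : Module.Basis W K H)
    (hbT : ∀ w : W, bT w = T w) (hT1 : T 1 = 1)
    (hTmul : ∀ u v : W, cs.length (u * v) = cs.length u + cs.length v →
      T u * T v = T (u * v))
    (hquad : ∀ s : B,
      (T (cs.simple s) + 1) * (T (cs.simple s) - algebraMap K H (qp s)) = 0)
    (hTunit : ∀ w : W, IsUnit (T w))
    (s : B) (v : W)
    (hlen : cs.length (cs.simple s * v) = cs.length (cs.simple s) + cs.length v) :
    (T (cs.simple s) ⊗ₜ[K] (1 : H)) *
        (T v ⊗ₜ[K] (((hTunit v).unit⁻¹ : Hˣ) : H) -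
          T (cs.simple s * v) ⊗ₜ[K] (((hTunit (cs.simple s * v)).unit⁻¹ : Hˣ) : H)) =
      (T v ⊗ₜ[K] (((hTunit v).unit⁻¹ : Hˣ) : H) -
          T (cs.simple s * v) ⊗ₜ[K] (((hTunit (cs.simple s * v)).unit⁻¹ : Hˣ) : H)) *
        ((1 : H) ⊗ₜ[K] (-((qp s : K) • (((hTunit (cs.simple s)).unit⁻¹ : Hˣ) : H)))) := by
  set q : K := (qp s : K) with hqdef
  set a : H := T (cs.simple s) with hadef
  set b : H := T v with hbdef
  set c : H := T (cs.simple s * v) with hcdef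
  set ai : H := (((hTunit (cs.simple s)).unit⁻¹ : Hˣ) : H) with haidef
  set bi : H := (((hTunit v).unit⁻¹ : Hˣ) : H) with hbidef
  set ci : H := (((hTunit (cs.simple s * v)).unit⁻¹ : Hˣ) : H) with hcidef
  have haai : a * ai = 1 := (hTunit (cs.simple s)).mul_val_inv
  have haia : ai * a = 1 := (hTunit (cs.simple s)).val_inv_mul
  have hbbi : b * bi = 1 := (hTunit v).mul_val_inv
  have hcic : ci * c = 1 := (hTunit (cs.simple s * v)).val_inv_mul
  have hc : a * b = c := hTmul _ _ hlen
  -- inverse of product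
  have hci : ci = bi * ai := by
    have h1 : c * (bi * ai) = 1 := by
      rw [← hc, mul_assoc, ← mul_assoc b bi, hbbi, one_mul, haai]
    calc ci = ci * (c * (bi * ai)) := by rw [h1, mul_one]
      _ = (ci * c) * (bi * ai) := by rw [mul_assoc]
      _ = bi * ai := by rw [hcic, one_mul]
  -- quadratic relation in smul form
  have hqsmul : algebraMap K H q = q • (1 : H) := Algebra.algebraMap_eq_smul_one q
  have h0 : a * a - q • a + a - q • (1:H) = 0 := by
    have h := hquad s
    rw [← hadef, ← hqdef, hqsmul] at h
    calc a * a - q • a + a - q • (1:H)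
        = (a + 1) * (a - q • (1:H)) := by
          rw [add_mul, one_mul, mul_sub, mul_smul_comm, mul_one]; abel
      _ = 0 := h
  have hquad' : a * a = q • a - a + q • (1 : H) := by
    calc a * a = (a * a - q • a + a - q • (1:H)) + (q • a - a + q • (1:H)) := by abel
      _ = q • a - a + q • (1:H) := by rw [h0, zero_add]
  -- key: -(q • ai) = q • 1 - 1 - a
  have hkey : -(q • ai) = q • (1 : H) - 1 - a := by
    have h1 : (a * a) * ai = a := by rw [mul_assoc, haai, mul_one]
    rw [hquad'] at h1
    have h2 : (q • a - a + q • (1:H)) * ai = q • (a * ai) - a * ai + q • ai := by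
      rw [add_mul, sub_mul, smul_mul_assoc, smul_mul_assoc, one_mul]
    rw [h2, haai] at h1
    -- h1 : q • 1 - 1 + q • ai = a
    calc -(q • ai) = (q • (1:H) - 1) - (q • (1:H) - 1 + q • ai) := by abel
      _ = q • (1:H) - 1 - a := by rw [h1]
  have hX : bi * (-(q • ai)) = q • bi - bi - bi * a := by
    rw [hkey, mul_sub, mul_sub, mul_one, mul_smul_comm, mul_one]
  have hciX : ci * (-(q • ai)) = q • ci - ci - bi := by
    rw [hkey, mul_sub, mul_sub, mul_one, mul_smul_comm, mul_one,
      hci, mul_assoc, haia, mul_one, ← hci]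
  -- bi * a in terms of ci and bi
  have hbia : bi * a = q • bi - bi + q • ci := by
    have h1 : bi * (-(q • ai)) = -(q • ci) := by
      rw [hci, mul_neg, mul_smul_comm]
    rw [hX] at h1
    calc bi * a = q • bi - bi - (q • bi - bi - bi * a) := by abel
      _ = q • bi - bi - (-(q • ci)) := by rw [h1]
      _ = q • bi - bi + q • ci := by abel
  -- a * c
  have hac : a * c = q • c - c + q • b := by
    rw [← hc, ← mul_assoc, hquad', add_mul, sub_mul, smul_mul_assoc, smul_mul_assoc,
      one_mul, hc]
  -- now expand the tensor identity
  rw [mul_sub, sub_mul, Algebra.TensorProduct.tmul_mul_tmul,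
    Algebra.TensorProduct.tmul_mul_tmul, Algebra.TensorProduct.tmul_mul_tmul,
    Algebra.TensorProduct.tmul_mul_tmul, one_mul, one_mul, mul_one, mul_one,
    hc, hac, hX, hciX, hbia]
  simp only [TensorProduct.tmul_sub, TensorProduct.tmul_add, TensorProduct.sub_tmul,
    TensorProduct.add_tmul, TensorProduct.tmul_smul, ← TensorProduct.smul_tmul']
  abel
end

section
/- Let (π, M) be a finite-dimensional H-module. For s ∈ S define τ_s ∈ End_K(H ⊗_K M) by τ_s(h ⊗ m) = hT_s ⊗ π(T_s)^{-1}m − h ⊗ m, and let L_s be the image of τ_s. Let φ : M^W → H ⊗_K M be the K-linear isomorphism φ((m_w)_{w∈W}) = Σ_{w∈W} T_w ⊗ π(T_w)^{-1} m_w, where M^W denotes the space of W-tuples of elements of M. Then φ^{-1}(L_s) = {(m_w)_{w∈W} ∈ M^W : m_{ws} = −m_w for all w ∈ W}. -/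
open scoped TensorProduct

/-- The `K`-linear endomorphism `v ↦ a • v` of a module `V` over a `K`-algebra `A`. -/
noncomputable def smulMap (K : Type) {A V : Type} [CommRing K] [Ring A] [Algebra K A]
    [AddCommGroup V] [Module A V] [Module K V] [IsScalarTower K A V] (a : A) :
    V →ₗ[K] V where
  toFun v := a • v
  map_add' := smul_add a
  map_smul' c v := (smul_comm c a v).symm

@[simp] lemma smulMap_apply (K : Type) {A V : Type} [CommRing K] [Ring A] [Algebra K A]
    [AddCommGroup V] [Module A V] [Module K V] [IsScalarTower K A V] (a : A) (v : V) :
    smulMap K a v = a • v := rfl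

/-- let `H` be the finite Hecke algebra of a finite Coxeter system `(W,S)`
over `K` and `(π, V)` a finite-dimensional `H`-module.  For a simple reflection
`s = cs.simple sb` let `τ_s ∈ End_K(H ⊗_K V)` be `h ⊗ m ↦ h·T_s ⊗ π(T_s)⁻¹ m − h ⊗ m`,
let `L_s` be its image, and let `φ : V^W → H ⊗_K V` be the `K`-linear map
`(m_w)_w ↦ Σ_w T_w ⊗ π(T_w)⁻¹ m_w`.  Then
`φ⁻¹(L_s) = {(m_w)_w : m_{ws} = −m_w for all w ∈ W}`. -/
theorem stmt_10 {B W : Type} [Group W] [Fintype W] [DecidableEq W]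
    {M : CoxeterMatrix B} (cs : CoxeterSystem M W)
    {K : Type} [Field K] [CharZero K]
    {H : Type} [Ring H] [Algebra K H]
    (qp : B → Kˣ)
    (hqconj : ∀ s t : B, IsConj (cs.simple s) (cs.simple t) → qp s = qp t)
    (T : W → H) (bT : Module.Basis W K H)
    (hbT : ∀ w : W, bT w = T w) (hT1 : T 1 = 1)
    (hTmul : ∀ u v : W, cs.length (u * v) = cs.length u + cs.length v →
      T u * T v = T (u * v))
    (hquad : ∀ s : B,
      (T (cs.simple s) + 1) * (T (cs.simple s) - algebraMap K H (qp s)) = 0)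
    (hTunit : ∀ w : W, IsUnit (T w))
    {V : Type} [AddCommGroup V] [Module H V] [Module K V] [IsScalarTower K H V]
    [FiniteDimensional K V]
    (sb : B) :
    (⇑(∑ w : W, (TensorProduct.mk K H V (T w)).comp
          ((smulMap K (((hTunit w).unit⁻¹ : Hˣ) : H)).comp
            (LinearMap.proj (R := K) (φ := fun _ : W => V) w)))) ⁻¹'
        (LinearMap.range
          (TensorProduct.map (LinearMap.mulRight K (T (cs.simple sb)))
              (smulMap (V := V) K (((hTunit (cs.simple sb)).unit⁻¹ : Hˣ) : H)) -
            LinearMap.id) : Set (H ⊗[K] V)) =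
      {x : W → V | ∀ w : W, x (w * cs.simple sb) = - x w} := by
  classical
  set s : W := cs.simple sb with hs
  set q : K := (qp sb : K) with hqdef
  set c : H := algebraMap K H q with hcdef
  set a : H := (((hTunit s).unit⁻¹ : Hˣ) : H) with hadef
  set τ : (H ⊗[K] V) →ₗ[K] (H ⊗[K] V) :=
    (TensorProduct.map (LinearMap.mulRight K (T s))
      (smulMap (V := V) K (((hTunit s).unit⁻¹ : Hˣ) : H)) - LinearMap.id) with hτdef
  set Φ : (W → V) →ₗ[K] (H ⊗[K] V) :=
    (∑ w : W, (TensorProduct.mk K H V (T w)).comp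
          ((smulMap K (((hTunit w).unit⁻¹ : Hˣ) : H)).comp
            (LinearMap.proj (R := K) (φ := fun _ : W => V) w))) with hΦdef
  -- basic unit facts
  have unit_spec : ∀ w : W, ((hTunit w).unit : H) = T w := fun w => (hTunit w).unit_spec
  have hTa : T s * a = 1 := by
    have h := (hTunit s).unit.mul_inv
    rwa [unit_spec] at h
  have haT : a * T s = 1 := by
    have h := (hTunit s).unit.inv_mul
    rwa [unit_spec] at h
  -- quadratic relation rearranged
  have hTs2 : T s * T s = T s * c - T s + c := by
    refine eq_of_sub_eq_zero ?_
    calc T s * T s - (T s * c - T s + c) = (T s + 1) * (T s - c) := by noncomm_ring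
      _ = 0 := hquad sb
  -- key inverse identity
  have hIdH : (c - 1) * a + c * (a * a) = 1 := by
    have h1 : T s * (a * a) = a := by rw [← mul_assoc, hTa, one_mul]
    have h2 : (T s * T s) * (a * a) = 1 := by rw [mul_assoc, h1, hTa]
    rw [hTs2] at h2
    have h3 : (T s * c - T s + c) * (a * a) = (c - 1) * a + c * (a * a) := by
      rw [add_mul, sub_mul, ← Algebra.commutes q (T s), mul_assoc c, h1, sub_mul, one_mul]
    rw [← h3, h2]
  -- descent bookkeeping
  set P : W → Prop := fun w => cs.length (w * s) = cs.length w + 1 with hPdef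
  have hP : ∀ w : W, P w ↔ ¬ cs.IsRightDescent w sb := by
    intro w
    rw [hPdef]
    exact (cs.not_isRightDescent_iff).symm
  have hss : ∀ w : W, w * s * s = w := fun w => cs.simple_mul_simple_cancel_right sb
  have hne : ∀ w : W, w ≠ w * s := by
    intro w hw
    exact cs.length_mul_simple_ne w sb (by rw [← hw])
  have hswap : ∀ w : W, ¬ P w ↔ P (w * s) := by
    intro w
    rw [hP, hP, not_not]
    exact cs.isRightDescent_iff_not_isRightDescent_mul
  have hmulTs : ∀ w : W, P w → T w * T s = T (w * s) := by
    intro w hw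
    rw [hPdef] at hw
    exact hTmul w s (by rw [hw, cs.length_simple])
  have hUnitmul : ∀ w : W, P w →
      (hTunit (w * s)).unit = (hTunit w).unit * (hTunit s).unit := by
    intro w hw
    apply Units.ext
    push_cast [unit_spec]
    rw [hmulTs w hw]
  have hainv : ∀ w : W, P w →
      (((hTunit (w * s)).unit⁻¹ : Hˣ) : H) = a * (((hTunit w).unit⁻¹ : Hˣ) : H) := by
    intro w hw
    rw [hUnitmul w hw, mul_inv_rev]
    push_cast
    rfl
  -- coordinate maps
  set cmap : W → (H ⊗[K] V) →ₗ[K] V :=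
    fun u => TensorProduct.lift ((LinearMap.lsmul K V).comp (bT.coord u)) with hcmapdef
  have hcmap_tmul : ∀ (u : W) (h : H) (v : V), cmap u (h ⊗ₜ[K] v) = bT.repr h u • v := by
    intro u h v
    simp [hcmapdef, Module.Basis.coord_apply]
  have hrepr : ∀ w u : W, bT.repr (T w) u = if u = w then 1 else 0 := by
    intro w u
    rw [← hbT w, bT.repr_self]
    rw [Finsupp.single_apply]
    simp [eq_comm]
  have hcmap_T : ∀ (u w : W) (v : V),
      cmap u (T w ⊗ₜ[K] v) = if u = w then v else 0 := by
    intro u w v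
    rw [hcmap_tmul, hrepr]
    split <;> simp
  -- τ on pure tensors
  have hτ_tmul : ∀ (h : H) (v : V), τ (h ⊗ₜ[K] v) = (h * T s) ⊗ₜ[K] (a • v) - h ⊗ₜ[K] v := by
    intro h v
    simp [hτdef, hadef]
  -- Φ applied
  have hΦ_apply : ∀ x : W → V,
      Φ x = ∑ w : W, T w ⊗ₜ[K] ((((hTunit w).unit⁻¹ : Hˣ) : H) • x w) := by
    intro x
    simp [hΦdef, LinearMap.sum_apply]
  have hcmap_Φ : ∀ (x : W → V) (p : W),
      cmap p (Φ x) = (((hTunit p).unit⁻¹ : Hˣ) : H) • x p := by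
    intro x p
    rw [hΦ_apply, map_sum]
    rw [Finset.sum_eq_single p]
    · rw [hcmap_T]; simp
    · intro w _ hwp
      rw [hcmap_T]; simp [Ne.symm hwp]
    · simp
  -- the key vanishing: for P w, cmap (w*s) ∘ τ + a • cmap w ∘ τ = 0
  have hPws : ∀ w : W, P w → ¬ P (w * s) := by
    intro w hw h
    exact (hswap (w * s)).mpr (by rw [hss]; exact hw) h
  have hcore0 : ∀ w : W, P w → ∀ (u : W) (v : V),
      cmap (w * s) (τ (T u ⊗ₜ[K] v)) + a • cmap w (τ (T u ⊗ₜ[K] v)) = 0 := by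
    intro w hw u v
    rw [hτ_tmul]
    by_cases hu : P u
    · rw [hmulTs u hu]
      simp only [map_sub, hcmap_T]
      have hws_ne_u : w * s ≠ u := fun h => hPws w hw (h ▸ hu)
      have hw_ne_us : w ≠ u * s := fun h => hPws u hu (h ▸ hw)
      by_cases hwu : w = u
      · subst hwu
        rw [if_pos rfl, if_pos rfl, if_neg hws_ne_u, if_neg hw_ne_us]
        simp [smul_sub]
      · have h1 : w * s ≠ u * s := fun h => hwu (mul_right_cancel h)
        rw [if_neg h1, if_neg hws_ne_u, if_neg hw_ne_us, if_neg hwu]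
        simp
    · have hu' : P (u * s) := (hswap u).mp hu
      have hTuTs : T u * T s = q • T u - T u + q • T (u * s) := by
        have h1 : T (u * s) * T s = T u := by
          have := hmulTs (u * s) hu'
          rwa [hss] at this
        calc T u * T s = T (u * s) * T s * T s := by rw [h1]
          _ = T (u * s) * (T s * T s) := by rw [mul_assoc]
          _ = T (u * s) * (T s * c - T s + c) := by rw [hTs2]
          _ = (T (u * s) * T s) * c - T (u * s) * T s + T (u * s) * c := by noncomm_ring
          _ = T u * c - T u + T (u * s) * c := by rw [h1]
          _ = q • T u - T u + q • T (u * s) := by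
              rw [hcdef, ← Algebra.commutes q (T u), ← Algebra.commutes q (T (u * s)),
                ← Algebra.smul_def, ← Algebra.smul_def]
      rw [hTuTs]
      simp only [TensorProduct.sub_tmul, TensorProduct.add_tmul, ← TensorProduct.smul_tmul',
        map_sub, map_add, map_smul, hcmap_T]
      have hw_ne_u : w ≠ u := fun h => hu (h ▸ hw)
      have hws_ne_us : w * s ≠ u * s := fun h => hw_ne_u (mul_right_cancel h)
      by_cases hwsu : w * s = u
      · subst hwsu
        simp only [hss, if_pos rfl, if_neg (Ne.symm (hne w)), if_neg (hne w), smul_zero,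
          sub_zero, zero_sub, add_zero, zero_add, neg_zero, smul_neg]
        have hval' : q • (a • v) - a • v + q • (a • (a • v)) - v = 0 := by
          have h := congrArg (fun h : H => h • v) hIdH
          have hval : q • (a • v) - a • v + q • (a • (a • v)) = v := by
            simpa [add_smul, sub_smul, mul_smul, one_smul, algebraMap_smul, hcdef] using h
          exact sub_eq_zero_of_eq hval
        rw [smul_comm a q]
        conv_rhs => rw [← hval']
        abel_nf
        exact congrArg _ (congrArg _ (add_comm _ _))
      · have hw_ne_us2 : w ≠ u * s := fun h => hwsu (by rw [h, hss])
        rw [if_neg hwsu, if_neg hwsu, if_neg hws_ne_us, if_neg hw_ne_u, if_neg hw_ne_u,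
          if_neg hw_ne_us2]
        simp
  have hcore : ∀ w : W, P w → ∀ z : H ⊗[K] V,
      cmap (w * s) (τ z) + a • cmap w (τ z) = 0 := by
    intro w hw z
    have hmap : (cmap (w * s) ∘ₗ τ) + (smulMap K a) ∘ₗ (cmap w ∘ₗ τ) = 0 := by
      apply (bT.tensorProduct (Module.Basis.ofVectorSpace K V)).ext
      rintro ⟨u, i⟩
      rw [Module.Basis.tensorProduct_apply, hbT]
      simpa using hcore0 w hw u (Module.Basis.ofVectorSpace K V i)
    simpa using DFunLike.congr_fun hmap z
  ext x
  simp only [Set.mem_preimage, Set.mem_setOf_eq, SetLike.mem_coe, LinearMap.mem_range]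
  constructor
  · rintro ⟨y, hy⟩
    have hkey : ∀ w : W, P w → x (w * s) = - x w := by
      intro w hw
      have h0 : cmap (w * s) (Φ x) + a • cmap w (Φ x) = 0 := by
        rw [← hy]; exact hcore w hw (y)
      rw [hcmap_Φ, hcmap_Φ, hainv w hw, mul_smul] at h0
      have h2 : a • ((((hTunit w).unit⁻¹ : Hˣ) : H) • (x (w * s) + x w)) = 0 := by
        rw [smul_add, smul_add]
        exact h0
      have h3 : (((hTunit w).unit⁻¹ : Hˣ) : H) • (x (w * s) + x w) = 0 := by
        have h := congrArg (fun v : V => T s • v) h2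
        simpa [smul_smul, ← mul_assoc, hTa] using h
      have hw1 : T w * (((hTunit w).unit⁻¹ : Hˣ) : H) = 1 := by
        have h := (hTunit w).unit.mul_inv
        rwa [unit_spec] at h
      have h4 : x (w * s) + x w = 0 := by
        have h := congrArg (fun v : V => T w • v) h3
        simpa [smul_smul, hw1] using h
      exact eq_neg_of_add_eq_zero_left h4
    intro w
    by_cases hw : P w
    · exact hkey w hw
    · have := hkey (w * s) ((hswap w).mp hw)
      rw [hss] at this
      rw [this, neg_neg]
  · intro hx
    set g : W → H ⊗[K] V :=
      fun u => T u ⊗ₜ[K] ((((hTunit u).unit⁻¹ : Hˣ) : H) • x u) with hgdef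
    refine ⟨- ∑ w ∈ Finset.univ.filter P, g w, ?_⟩
    have hterm : ∀ w : W, P w → - τ (g w) = g w + g (w * s) := by
      intro w hw
      rw [hgdef]
      simp only
      rw [hτ_tmul, hmulTs w hw]
      have hxx : (((hTunit (w * s)).unit⁻¹ : Hˣ) : H) • x (w * s)
          = - (a • ((((hTunit w).unit⁻¹ : Hˣ) : H) • x w)) := by
        rw [hx w, hainv w hw, mul_smul, smul_neg, smul_neg]
      rw [hxx, TensorProduct.tmul_neg]
      abel
    calc τ (- ∑ w ∈ Finset.univ.filter P, g w)
        = ∑ w ∈ Finset.univ.filter P, - τ (g w) := by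
          rw [map_neg, map_sum, ← Finset.sum_neg_distrib]
      _ = ∑ w ∈ Finset.univ.filter P, (g w + g (w * s)) :=
          Finset.sum_congr rfl (fun w hwmem => hterm w (Finset.mem_filter.mp hwmem).2)
      _ = ∑ w ∈ Finset.univ.filter P, g w + ∑ w ∈ Finset.univ.filter P, g (w * s) :=
          Finset.sum_add_distrib
      _ = ∑ w ∈ Finset.univ.filter P, g w
            + ∑ w ∈ Finset.univ.filter (fun w => ¬ P w), g w := by
          congr 1
          refine Finset.sum_nbij' (fun w => w * s) (fun w => w * s) ?_ ?_ ?_ ?_ ?_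
          · intro w hwmem
            simp only [Finset.mem_filter, Finset.mem_univ, true_and] at hwmem ⊢
            exact hPws w hwmem
          · intro w hwmem
            simp only [Finset.mem_filter, Finset.mem_univ, true_and] at hwmem ⊢
            exact (hswap w).mp hwmem
          · intro w _; exact hss w
          · intro w _; exact hss w
          · intro w _; rfl
      _ = ∑ w : W, g w := Finset.sum_filter_add_sum_filter_not _ _ _
      _ = Φ x := (hΦ_apply x).symm
end

section
/- For every w ∈ W and every I ⊆ Δ: the region w·C_I is contained in span_ℝ(I₀)^⊥ if and only if w^{-1}·α ∈ ⟨I⟩ for all α ∈ I₀. Consequently, the regions of the Coxeter complex of W contained in span_ℝ(I₀)^⊥ are exactly the sets w·C_I with I ⊆ Δ and w^{-1} ∈ C_{I₀}(I). -/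
/-- The open region `C_I` of the Coxeter complex attached to a subset `I` of the
simple system `Δ`:  `C_I = {v : ⟨v,α⟩ = 0 ∀ α ∈ I, ⟨v,α⟩ > 0 ∀ α ∈ Δ∖I}`. -/
def stmtCI {V : Type} [NormedAddCommGroup V] [InnerProductSpace ℝ V]
    (Δ I : Finset V) : Set V :=
  {v : V | (∀ α ∈ I, (inner ℝ v α : ℝ) = 0) ∧ ∀ α ∈ Δ, α ∉ I → 0 < (inner ℝ v α : ℝ)}

/-- for a finite root system `Φ` spanning a real inner ℝ product space `V`,
with reflections `sα`, reflection group `W = ⟨sα : α ∈ Φ⟩`, simple system `Δ` and a fixed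
`I₀ ⊆ Δ`:  for every `w ∈ W` and `I ⊆ Δ`, the region `w·C_I` is contained in
`span(I₀)^⊥` if and only if `w⁻¹·α ∈ span(I)` for all `α ∈ I₀`; i.e. the regions of the
Coxeter complex contained in `span(I₀)^⊥` are exactly the `w·C_I` with `w⁻¹ ∈ C_{I₀}(I)`. -/
lemma aux_mem_orth_span {V : Type} [NormedAddCommGroup V] [InnerProductSpace ℝ V]
    (s : Set V) (v : V) (h : ∀ β ∈ s, (inner ℝ β v : ℝ) = 0) :
    v ∈ (Submodule.span ℝ s)ᗮ := by
  rw [Submodule.mem_orthogonal]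
  intro u hu
  induction hu using Submodule.span_induction with
  | mem x hx => exact h x hx
  | zero => simp
  | add x y _ _ hx hy => simp [inner_add_left, hx, hy]
  | smul c x _ hx => simp [inner_smul_left, hx]

/-- for a finite root system `Φ` spanning a real inner product space `V`,
with reflections `sα`, reflection group `W = ⟨sα : α ∈ Φ⟩`, simple system `Δ` and a fixed
`I₀ ⊆ Δ`:  for every `w ∈ W` and `I ⊆ Δ`, the region `w·C_I` is contained in
`span(I₀)^⊥` if and only if `w⁻¹·α ∈ span(I)` for all `α ∈ I₀`; i.e. the regions of the
Coxeter complex contained in `span(I₀)^⊥` are exactly the `w·C_I` with `w⁻¹ ∈ C_{I₀}(I)`. -/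
theorem stmt_12 {V : Type} [NormedAddCommGroup V] [InnerProductSpace ℝ V]
    [FiniteDimensional ℝ V]
    (Φ : Finset V) (hΦ0 : (0 : V) ∉ Φ)
    (hΦspan : Submodule.span ℝ (Φ : Set V) = ⊤)
    (sα : V → (V ≃ₗᵢ[ℝ] V))
    (hrefl : ∀ α ∈ Φ, ∀ v : V, sα α v = v - (2 * (inner ℝ v α : ℝ) / (inner ℝ α α : ℝ)) • α)
    (hstab : ∀ α ∈ Φ, (fun v => sα α v) '' (Φ : Set V) = (Φ : Set V))
    (Δ : Finset V) (hΔΦ : Δ ⊆ Φ)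
    (hΔli : LinearIndependent ℝ (fun x : (Δ : Set V) => (x : V)))
    (hΔsp : Submodule.span ℝ (Δ : Set V) = ⊤)
    (hsimp : ∀ β ∈ Φ, (∃ c : V → ℝ, (∀ α ∈ Δ, 0 ≤ c α) ∧ β = ∑ α ∈ Δ, c α • α) ∨
        (∃ c : V → ℝ, (∀ α ∈ Δ, c α ≤ 0) ∧ β = ∑ α ∈ Δ, c α • α))
    (I₀ : Finset V) (hI₀ : I₀ ⊆ Δ)
    (w : V ≃ₗᵢ[ℝ] V)
    (hw : w ∈ Subgroup.closure ((fun α => sα α) '' (Φ : Set V)))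
    (I : Finset V) (hI : I ⊆ Δ) :
    (fun v => w v) '' stmtCI Δ I ⊆ ((Submodule.span ℝ (I₀ : Set V))ᗮ : Set V) ↔
      ∀ α ∈ I₀, w⁻¹ α ∈ Submodule.span ℝ (I : Set V) := by
  classical
  -- a point v₀ ∈ C_I, dual to the basis Δ
  have hBspan : ⊤ ≤ Submodule.span ℝ (Set.range (fun x : (Δ : Set V) => (x : V))) := by
    rw [Subtype.range_coe, hΔsp]
  set B : Module.Basis (Δ : Set V) ℝ V := Module.Basis.mk hΔli hBspan with hB
  set L : V →ₗ[ℝ] ℝ := B.constr ℝ (fun α => if (α : V) ∈ I then 0 else 1) with hL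
  set v₀ : V := (InnerProductSpace.toDual ℝ V).symm (LinearMap.toContinuousLinearMap L)
    with hv₀def
  have hv₀ : ∀ α ∈ Δ, (inner ℝ v₀ α : ℝ) = if α ∈ I then 0 else 1 := by
    intro α hα
    have h1 : (inner ℝ v₀ α : ℝ) = L α := by
      rw [hv₀def, InnerProductSpace.toDual_symm_apply]
      rfl
    have h2 : B ⟨α, hα⟩ = α := by rw [hB, Module.Basis.mk_apply]
    rw [h1, ← h2, hL, Module.Basis.constr_basis, h2]
  have hv₀CI : v₀ ∈ stmtCI Δ I := by
    constructor
    · intro α hα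
      rw [hv₀ α (hI hα), if_pos hα]
    · intro α hα hαI
      rw [hv₀ α hα, if_neg hαI]
      norm_num
  -- perturbations of v₀ stay in C_I
  have hperturb : ∀ u' : V, u' ∈ (Submodule.span ℝ (I : Set V))ᗮ →
      ∃ ε : ℝ, 0 < ε ∧ v₀ + ε • u' ∈ stmtCI Δ I := by
    intro u' hu'
    set S : ℝ := ∑ α ∈ Δ, |(inner ℝ u' α : ℝ)| with hS
    have hS0 : 0 ≤ S := Finset.sum_nonneg fun _ _ => abs_nonneg _
    refine ⟨(1 + S)⁻¹, by positivity, ?_, ?_⟩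
    · intro α hα
      have h0 : (inner ℝ u' α : ℝ) = 0 := by
        rw [real_inner_comm]
        exact (Submodule.mem_orthogonal _ _).mp hu' α
          (Submodule.subset_span hα)
      have h1 : (inner ℝ v₀ α : ℝ) = 0 := by rw [hv₀ α (hI hα), if_pos hα]
      rw [inner_add_left, real_inner_smul_left, h0, h1]
      ring
    · intro α hα hαI
      have h1 : (inner ℝ v₀ α : ℝ) = 1 := by rw [hv₀ α hα, if_neg hαI]
      rw [inner_add_left, real_inner_smul_left, h1]
      have habs : |(inner ℝ u' α : ℝ)| ≤ S := by
        rw [hS]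
        exact Finset.single_le_sum (f := fun α => |(inner ℝ u' α : ℝ)|)
          (fun _ _ => abs_nonneg _) hα
      set c : ℝ := (inner ℝ u' α : ℝ)
      have h1S : (0:ℝ) < 1 + S := by positivity
      have hkey : (1 + S)⁻¹ * (1 + S) = 1 := inv_mul_cancel₀ h1S.ne'
      nlinarith [neg_abs_le c, abs_nonneg c, inv_pos.mpr h1S]
  have hinvw : ∀ x : V, w (w⁻¹ x) = x := fun x => w.apply_symm_apply x
  constructor
  · -- forward
    intro h α hα
    have key : ∀ u' ∈ (Submodule.span ℝ (I : Set V))ᗮ, (inner ℝ u' (w⁻¹ α) : ℝ) = 0 := by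
      intro u' hu'
      obtain ⟨ε, hε, hmem⟩ := hperturb u' hu'
      have horth : ∀ v ∈ stmtCI Δ I, (inner ℝ (w⁻¹ α) v : ℝ) = 0 := by
        intro v hv
        have hwv : w v ∈ (Submodule.span ℝ (I₀ : Set V))ᗮ :=
          h ⟨v, hv, rfl⟩
        have := (Submodule.mem_orthogonal _ _).mp hwv α (Submodule.subset_span hα)
        calc (inner ℝ (w⁻¹ α) v : ℝ) = inner ℝ (w (w⁻¹ α)) (w v) :=
              (w.inner_map_map _ _).symm
          _ = inner ℝ α (w v) := by rw [hinvw]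
          _ = 0 := this
      have e1 := horth v₀ hv₀CI
      have e2 := horth _ hmem
      rw [inner_add_right, real_inner_smul_right, e1] at e2
      have hmul : ε * (inner ℝ (w⁻¹ α) u' : ℝ) = 0 := by linarith
      have : (inner ℝ (w⁻¹ α) u' : ℝ) = 0 :=
        (mul_eq_zero.mp hmul).resolve_left hε.ne'
      rw [real_inner_comm]
      exact this
    have : w⁻¹ α ∈ (Submodule.span ℝ (I : Set V))ᗮᗮ :=
      (Submodule.mem_orthogonal _ _).mpr key
    rwa [Submodule.orthogonal_orthogonal] at this
  · -- reverse
    rintro h x ⟨v, hv, rfl⟩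
    rw [SetLike.mem_coe, Submodule.mem_orthogonal]
    intro u hu
    induction hu using Submodule.span_induction with
    | mem β hβ =>
      have hv' : v ∈ (Submodule.span ℝ (I : Set V))ᗮ :=
        aux_mem_orth_span _ _ (fun γ hγ => by rw [real_inner_comm]; exact hv.1 γ hγ)
      have := (Submodule.mem_orthogonal _ _).mp hv' (w⁻¹ β) (h β hβ)
      calc (inner ℝ β (w v) : ℝ) = inner ℝ (w (w⁻¹ β)) (w v) := by
            rw [hinvw]
        _ = inner ℝ (w⁻¹ β) v := w.inner_map_map _ _
        _ = 0 := this
    | zero => simp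
    | add x y _ _ hx hy => simp [inner_add_left, hx, hy]
    | smul c x _ hx => simp [inner_smul_left, hx]
end
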